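/- (Theorem 4, (2) ⇒ (1).) Suppose J(0, u) ≥ 0 for every control u. Fix x₀ ∈ ℝⁿ and suppose sup_{0 < ε ≤ 1} Σ_{t=0}^{N−1}|u^ε_t|² < ∞, where u^ε is the open-loop optimal control of the perturbed Problem (LQ)_ε for initial value x₀. Then there exists an open-loop optimal control for Problem (LQ) with initial value x₀. -/

import Mathlib

open Matrix Finset

noncomputable section

/-- State trajectory of the discrete-time linear system `x_{t+1} = A_t x_t + B_t u_t`. -/
def lqState {n m : ℕ} (A : ℕ → Matrix (Fin n) (Fin n) ℝ) (B : ℕ → Matrix (Fin n) (Fin m) ℝ)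
    (x₀ : Fin n → ℝ) (u : ℕ → Fin m → ℝ) : ℕ → Fin n → ℝ
  | 0 => x₀
  | t + 1 => A t *ᵥ lqState A B x₀ u t + B t *ᵥ u t

/-- Quadratic cost `J(x₀, u)`. -/
def lqCost {n m : ℕ} (N : ℕ) (A : ℕ → Matrix (Fin n) (Fin n) ℝ)
    (B : ℕ → Matrix (Fin n) (Fin m) ℝ) (Q : ℕ → Matrix (Fin n) (Fin n) ℝ)
    (R : ℕ → Matrix (Fin m) (Fin m) ℝ) (S : ℕ → Matrix (Fin m) (Fin n) ℝ)
    (H : Matrix (Fin n) (Fin n) ℝ) (x₀ : Fin n → ℝ) (u : ℕ → Fin m → ℝ) : ℝ :=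
  (∑ t ∈ range N,
      (lqState A B x₀ u t ⬝ᵥ Q t *ᵥ lqState A B x₀ u t
        + 2 * (u t ⬝ᵥ S t *ᵥ lqState A B x₀ u t)
        + u t ⬝ᵥ R t *ᵥ u t))
    + lqState A B x₀ u N ⬝ᵥ H *ᵥ lqState A B x₀ u N

/-- Closed-loop state `x_{t+1} = (A_t + B_t K_t) x_t + B_t v_t`. -/
def clState {n m : ℕ} (A : ℕ → Matrix (Fin n) (Fin n) ℝ) (B : ℕ → Matrix (Fin n) (Fin m) ℝ)
    (K : ℕ → Matrix (Fin m) (Fin n) ℝ) (v : ℕ → Fin m → ℝ) (x₀ : Fin n → ℝ) :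
    ℕ → Fin n → ℝ
  | 0 => x₀
  | t + 1 => (A t + B t * K t) *ᵥ clState A B K v x₀ t + B t *ᵥ v t

/-- Outcome control `u_t = K_t x_t + v_t` of a closed-loop pair. -/
def clControl {n m : ℕ} (A : ℕ → Matrix (Fin n) (Fin n) ℝ) (B : ℕ → Matrix (Fin n) (Fin m) ℝ)
    (K : ℕ → Matrix (Fin m) (Fin n) ℝ) (v : ℕ → Fin m → ℝ) (x₀ : Fin n → ℝ) (t : ℕ) :
    Fin m → ℝ :=
  K t *ᵥ clState A B K v x₀ t + v t


/-- Perturbed cost `J_ε(x₀,u) = J(x₀,u) + ε Σ|u_t|²`. -/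
def lqCostPert {n m : ℕ} (N : ℕ) (A : ℕ → Matrix (Fin n) (Fin n) ℝ)
    (B : ℕ → Matrix (Fin n) (Fin m) ℝ) (Q : ℕ → Matrix (Fin n) (Fin n) ℝ)
    (R : ℕ → Matrix (Fin m) (Fin m) ℝ) (S : ℕ → Matrix (Fin m) (Fin n) ℝ)
    (H : Matrix (Fin n) (Fin n) ℝ) (ε : ℝ) (x₀ : Fin n → ℝ) (u : ℕ → Fin m → ℝ) : ℝ :=
  lqCost N A B Q R S H x₀ u + ε * ∑ t ∈ range N, u t ⬝ᵥ u t

/-- Auxiliary backward recursion for the perturbed Riccati equation: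
`lqPAux ... k` is the Riccati solution at time `N - k`. -/
def lqPAux {n m : ℕ} (N : ℕ) (A : ℕ → Matrix (Fin n) (Fin n) ℝ)
    (B : ℕ → Matrix (Fin n) (Fin m) ℝ) (Q : ℕ → Matrix (Fin n) (Fin n) ℝ)
    (R : ℕ → Matrix (Fin m) (Fin m) ℝ) (S : ℕ → Matrix (Fin m) (Fin n) ℝ)
    (H : Matrix (Fin n) (Fin n) ℝ) (ε : ℝ) : ℕ → Matrix (Fin n) (Fin n) ℝ
  | 0 => H
  | k + 1 =>
    Q (N - (k + 1)) + (A (N - (k + 1)))ᵀ * lqPAux N A B Q R S H ε k * A (N - (k + 1))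
      - ((A (N - (k + 1)))ᵀ * lqPAux N A B Q R S H ε k * B (N - (k + 1)) + (S (N - (k + 1)))ᵀ)
        * (R (N - (k + 1)) + (B (N - (k + 1)))ᵀ * lqPAux N A B Q R S H ε k * B (N - (k + 1))
            + ε • (1 : Matrix (Fin m) (Fin m) ℝ))⁻¹
        * ((B (N - (k + 1)))ᵀ * lqPAux N A B Q R S H ε k * A (N - (k + 1)) + S (N - (k + 1)))

/-- Solution `P^ε_t` of the perturbed Riccati recursion
`P^ε_N = H`, `P^ε_t = Q_t + A_t′P^ε_{t+1}A_t − (A_t′P^ε_{t+1}B_t + S_t′)(R_t +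
B_t′P^ε_{t+1}B_t + εI)⁻¹(B_t′P^ε_{t+1}A_t + S_t)`. -/
def lqPe {n m : ℕ} (N : ℕ) (A : ℕ → Matrix (Fin n) (Fin n) ℝ)
    (B : ℕ → Matrix (Fin n) (Fin m) ℝ) (Q : ℕ → Matrix (Fin n) (Fin n) ℝ)
    (R : ℕ → Matrix (Fin m) (Fin m) ℝ) (S : ℕ → Matrix (Fin m) (Fin n) ℝ)
    (H : Matrix (Fin n) (Fin n) ℝ) (ε : ℝ) (t : ℕ) : Matrix (Fin n) (Fin n) ℝ :=
  lqPAux N A B Q R S H ε (N - t)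

/-- Perturbed feedback gain `K^ε_t = −(R_t + B_t′P^ε_{t+1}B_t + εI)⁻¹(B_t′P^ε_{t+1}A_t + S_t)`. -/
def lqKe {n m : ℕ} (N : ℕ) (A : ℕ → Matrix (Fin n) (Fin n) ℝ)
    (B : ℕ → Matrix (Fin n) (Fin m) ℝ) (Q : ℕ → Matrix (Fin n) (Fin n) ℝ)
    (R : ℕ → Matrix (Fin m) (Fin m) ℝ) (S : ℕ → Matrix (Fin m) (Fin n) ℝ)
    (H : Matrix (Fin n) (Fin n) ℝ) (ε : ℝ) (t : ℕ) : Matrix (Fin m) (Fin n) ℝ :=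
  -((R t + (B t)ᵀ * lqPe N A B Q R S H ε (t + 1) * B t
      + ε • (1 : Matrix (Fin m) (Fin m) ℝ))⁻¹
    * ((B t)ᵀ * lqPe N A B Q R S H ε (t + 1) * A t + S t))

/-- Perturbed optimal control `u^ε_t = K^ε_t x^ε_t`, where `x^ε` is the closed-loop state
`x^ε_{t+1} = (A_t + B_t K^ε_t) x^ε_t`, `x^ε_0 = x₀`. -/
def lqUe {n m : ℕ} (N : ℕ) (A : ℕ → Matrix (Fin n) (Fin n) ℝ)
    (B : ℕ → Matrix (Fin n) (Fin m) ℝ) (Q : ℕ → Matrix (Fin n) (Fin n) ℝ)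
    (R : ℕ → Matrix (Fin m) (Fin m) ℝ) (S : ℕ → Matrix (Fin m) (Fin n) ℝ)
    (H : Matrix (Fin n) (Fin n) ℝ) (ε : ℝ) (x₀ : Fin n → ℝ) (t : ℕ) : Fin m → ℝ :=
  lqKe N A B Q R S H ε t *ᵥ
    clState A B (lqKe N A B Q R S H ε) (fun _ => 0) x₀ t


/-! For `ε > 0`, completing the square along the Riccati recursion writes
`J(x₀,u) + εΣ|u_t|²` as `x₀′P^ε_0x₀ + Σ_t (u_t − K^ε_t x_t)′M_t(u_t − K^ε_t x_t)` with
`M_t = R_t + B_t′P^ε_{t+1}B_t + εI`. Testing `J(0,·) ≥ 0` on a control that vanishes before `t`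
and follows the feedback after `t` gives `M_t ≥ εI`, by backward induction on `t`; so `u^ε`
minimizes the perturbed cost and `J(x₀,u^ε) ≤ J(x₀,u) + εΣ|u_t|²`. A bounded family of
controls has a convergent subsequence as `ε → 0`, and by continuity of `J` its limit is optimal. -/

open Filter Topology

theorem Matrix.dotProduct_transpose_mul_mul_mulVec {𝕜 ι κ μ : Type*} [CommSemiring 𝕜] [Fintype ι]
    [Fintype κ] [Fintype μ] (X : Matrix ι κ 𝕜) (Y : Matrix ι ι 𝕜) (Z : Matrix ι μ 𝕜)
    (x : κ → 𝕜) (w : μ → 𝕜) : x ⬝ᵥ (Xᵀ * Y * Z) *ᵥ w = (X *ᵥ x) ⬝ᵥ Y *ᵥ (Z *ᵥ w) := by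
  rw [← mulVec_mulVec, ← mulVec_mulVec, dotProduct_transpose_mulVec, dotProduct_comm]

theorem Matrix.riccati_completeSquare {𝕜 ι κ : Type*} [CommRing 𝕜] [Fintype ι] [Fintype κ]
    [DecidableEq κ] (A Q P : Matrix ι ι 𝕜) (B : Matrix ι κ 𝕜) (R : Matrix κ κ 𝕜)
    (S : Matrix κ ι 𝕜) (hP : Pᵀ = P) (hM : (R + Bᵀ * P * B)ᵀ = R + Bᵀ * P * B)
    (hMdet : IsUnit (R + Bᵀ * P * B).det) (x : ι → 𝕜) (u : κ → 𝕜) :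
    x ⬝ᵥ Q *ᵥ x + 2 * (u ⬝ᵥ S *ᵥ x) + u ⬝ᵥ R *ᵥ u
        + (A *ᵥ x + B *ᵥ u) ⬝ᵥ P *ᵥ (A *ᵥ x + B *ᵥ u) =
      x ⬝ᵥ (Q + Aᵀ * P * A - (Aᵀ * P * B + Sᵀ) * (R + Bᵀ * P * B)⁻¹ * (Bᵀ * P * A + S)) *ᵥ x
        + (u - -((R + Bᵀ * P * B)⁻¹ * (Bᵀ * P * A + S)) *ᵥ x) ⬝ᵥ (R + Bᵀ * P * B) *ᵥ
          (u - -((R + Bᵀ * P * B)⁻¹ * (Bᵀ * P * A + S)) *ᵥ x) := by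
  set M := R + Bᵀ * P * B
  set L := Bᵀ * P * A + S
  have hL : Aᵀ * P * B + Sᵀ = Lᵀ := by
    simp only [L, transpose_add, transpose_mul, transpose_transpose, hP, Matrix.mul_assoc]
  set y := M⁻¹ *ᵥ (L *ᵥ x)
  have hKx : (M⁻¹ * L) *ᵥ x = y := (mulVec_mulVec _ _ _).symm
  have hMy : M *ᵥ y = L *ᵥ x := by
    rw [mulVec_mulVec, mul_nonsing_inv _ hMdet, one_mulVec]
  have hyM : y ⬝ᵥ M *ᵥ u = u ⬝ᵥ L *ᵥ x := by
    rw [← dotProduct_transpose_mulVec, hM, hMy]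
  have hPsymm : (A *ᵥ x) ⬝ᵥ P *ᵥ (B *ᵥ u) = (B *ᵥ u) ⬝ᵥ P *ᵥ (A *ᵥ x) := by
    rw [← dotProduct_transpose_mulVec, hP]
  have hMu : u ⬝ᵥ M *ᵥ u = u ⬝ᵥ R *ᵥ u + (B *ᵥ u) ⬝ᵥ P *ᵥ (B *ᵥ u) := by
    rw [add_mulVec, dotProduct_add, dotProduct_transpose_mul_mul_mulVec]
  have hLu : u ⬝ᵥ L *ᵥ x = (B *ᵥ u) ⬝ᵥ P *ᵥ (A *ᵥ x) + u ⬝ᵥ S *ᵥ x := by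
    rw [add_mulVec, dotProduct_add, dotProduct_transpose_mul_mul_mulVec]
  rw [hL, neg_mulVec, sub_neg_eq_add, hKx, sub_mulVec, add_mulVec, dotProduct_sub,
    dotProduct_add, dotProduct_transpose_mul_mul_mulVec, dotProduct_transpose_mul_mul_mulVec]
  simp only [mulVec_add, dotProduct_add, add_dotProduct, hMy, hyM, hPsymm, hMu, hLu,
    dotProduct_comm y (L *ᵥ x)]
  ring

theorem Matrix.posDef_of_mul_dotProduct_self_le {κ : Type*} [Fintype κ] {M : Matrix κ κ ℝ}
    (hM : M.IsSymm) {ε : ℝ} (hε : 0 < ε) (h : ∀ w, ε * (w ⬝ᵥ w) ≤ w ⬝ᵥ M *ᵥ w) : M.PosDef := by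
  refine posDef_iff_dotProduct_mulVec.mpr ⟨isHermitian_iff_isSymm.mpr hM, fun w hw => ?_⟩
  have hw' : 0 < w ⬝ᵥ w := by simpa using dotProduct_star_self_pos_iff.mpr hw
  simpa using (mul_pos hε hw').trans_le (h w)

lemma lqState_clControl {n m : ℕ} (A : ℕ → Matrix (Fin n) (Fin n) ℝ)
    (B : ℕ → Matrix (Fin n) (Fin m) ℝ) (K : ℕ → Matrix (Fin m) (Fin n) ℝ)
    (v : ℕ → Fin m → ℝ) (x₀ : Fin n → ℝ) :
    lqState A B x₀ (clControl A B K v x₀) = clState A B K v x₀ := by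
  funext t
  induction t with
  | zero => rfl
  | succ t ih =>
    rw [lqState, clState, ih, clControl, mulVec_add, mulVec_mulVec, add_mulVec, add_assoc]

lemma clState_eq_zero_of_le {n m : ℕ} (A : ℕ → Matrix (Fin n) (Fin n) ℝ)
    (B : ℕ → Matrix (Fin n) (Fin m) ℝ) (K : ℕ → Matrix (Fin m) (Fin n) ℝ)
    {v : ℕ → Fin m → ℝ} {t : ℕ} (hv : ∀ s < t, v s = 0) :
    ∀ s ≤ t, clState A B K v 0 s = 0
  | 0, _ => rfl
  | s + 1, hs => by
    rw [clState, clState_eq_zero_of_le A B K hv s (by omega), hv s hs, mulVec_zero, mulVec_zero,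
      add_zero]

lemma lqState_congr {n m : ℕ} (A : ℕ → Matrix (Fin n) (Fin n) ℝ)
    (B : ℕ → Matrix (Fin n) (Fin m) ℝ) (x₀ : Fin n → ℝ) {u u' : ℕ → Fin m → ℝ} {t : ℕ}
    (h : ∀ s < t, u s = u' s) : lqState A B x₀ u t = lqState A B x₀ u' t := by
  induction t with
  | zero => rfl
  | succ t ih =>
    rw [lqState, lqState, ih fun s hs => h s (by omega), h t (by omega)]

lemma continuous_lqState {n m : ℕ} (A : ℕ → Matrix (Fin n) (Fin n) ℝ)
    (B : ℕ → Matrix (Fin n) (Fin m) ℝ) (x₀ : Fin n → ℝ) (t : ℕ) :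
    Continuous fun u => lqState A B x₀ u t := by
  induction t with
  | zero => exact continuous_const
  | succ t ih => simp only [lqState]; fun_prop

section Riccati

variable {n m : ℕ} (N : ℕ) (A : ℕ → Matrix (Fin n) (Fin n) ℝ)
  (B : ℕ → Matrix (Fin n) (Fin m) ℝ) (Q : ℕ → Matrix (Fin n) (Fin n) ℝ)
  (R : ℕ → Matrix (Fin m) (Fin m) ℝ) (S : ℕ → Matrix (Fin m) (Fin n) ℝ)
  (H : Matrix (Fin n) (Fin n) ℝ) (ε : ℝ)

def lqStage (t : ℕ) (x : Fin n → ℝ) (u : Fin m → ℝ) : ℝ :=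
  x ⬝ᵥ Q t *ᵥ x + 2 * (u ⬝ᵥ S t *ᵥ x) + u ⬝ᵥ R t *ᵥ u

lemma lqCost_eq (x₀ : Fin n → ℝ) (u : ℕ → Fin m → ℝ) :
    lqCost N A B Q R S H x₀ u =
      ∑ t ∈ range N, lqStage Q R S t (lqState A B x₀ u t) (u t)
        + lqState A B x₀ u N ⬝ᵥ H *ᵥ lqState A B x₀ u N := rfl

lemma lqCost_congr (x₀ : Fin n → ℝ) {u u' : ℕ → Fin m → ℝ} (h : ∀ s < N, u s = u' s) :
    lqCost N A B Q R S H x₀ u = lqCost N A B Q R S H x₀ u' := by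
  rw [lqCost_eq, lqCost_eq, lqState_congr A B x₀ h]
  congr 1
  refine sum_congr rfl fun t ht => ?_
  have ht : t < N := mem_range.mp ht
  rw [lqState_congr A B x₀ fun s hs => h s (hs.trans ht), h t ht]

lemma continuous_lqCost (x₀ : Fin n → ℝ) : Continuous (lqCost N A B Q R S H x₀) := by
  have := continuous_lqState A B x₀
  unfold lqCost
  fun_prop

def lqMe (t : ℕ) : Matrix (Fin m) (Fin m) ℝ :=
  R t + (B t)ᵀ * lqPe N A B Q R S H ε (t + 1) * B t + ε • 1

lemma lqPe_self : lqPe N A B Q R S H ε N = H := by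
  rw [lqPe, Nat.sub_self, lqPAux]

lemma lqPe_of_lt {t : ℕ} (ht : t < N) :
    lqPe N A B Q R S H ε t =
      Q t + (A t)ᵀ * lqPe N A B Q R S H ε (t + 1) * A t
        - ((A t)ᵀ * lqPe N A B Q R S H ε (t + 1) * B t + (S t)ᵀ) * (lqMe N A B Q R S H ε t)⁻¹
          * ((B t)ᵀ * lqPe N A B Q R S H ε (t + 1) * A t + S t) := by
  have hk : N - t = N - (t + 1) + 1 := by omega
  have ht' : N - (N - (t + 1) + 1) = t := by omega
  rw [lqPe, hk, lqPAux, ht']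
  rfl

lemma lqKe_eq (t : ℕ) :
    lqKe N A B Q R S H ε t =
      -((lqMe N A B Q R S H ε t)⁻¹ * ((B t)ᵀ * lqPe N A B Q R S H ε (t + 1) * A t + S t)) :=
  rfl

lemma lqUe_eq_clControl (x₀ : Fin n → ℝ) :
    lqUe N A B Q R S H ε x₀ = clControl A B (lqKe N A B Q R S H ε) (fun _ => 0) x₀ := by
  funext t
  rw [lqUe, clControl, add_zero]

lemma lqStage_add_lqPe_succ {t : ℕ} (ht : t < N) (hP : (lqPe N A B Q R S H ε (t + 1)).IsSymm)
    (hM : (lqMe N A B Q R S H ε t).PosDef) (x : Fin n → ℝ) (u : Fin m → ℝ) :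
    lqStage Q R S t x u + ε * (u ⬝ᵥ u)
        + (A t *ᵥ x + B t *ᵥ u) ⬝ᵥ lqPe N A B Q R S H ε (t + 1) *ᵥ (A t *ᵥ x + B t *ᵥ u) =
      x ⬝ᵥ lqPe N A B Q R S H ε t *ᵥ x
        + (u - lqKe N A B Q R S H ε t *ᵥ x) ⬝ᵥ lqMe N A B Q R S H ε t *ᵥ
          (u - lqKe N A B Q R S H ε t *ᵥ x) := by
  have hMeq : lqMe N A B Q R S H ε t =
      R t + ε • 1 + (B t)ᵀ * lqPe N A B Q R S H ε (t + 1) * B t := add_right_comm _ _ _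
  have hMsymm := isHermitian_iff_isSymm.mp hM.isHermitian
  have hMdet := (isUnit_iff_isUnit_det _).mp hM.isUnit
  rw [hMeq] at hMsymm hMdet
  rw [lqPe_of_lt N A B Q R S H ε ht, lqKe_eq, hMeq, lqStage,
    ← riccati_completeSquare _ _ _ _ _ _ hP hMsymm hMdet]
  simp only [add_mulVec, smul_mulVec, one_mulVec, dotProduct_add, dotProduct_smul, smul_eq_mul]
  ring

def lqCostToGo (t : ℕ) (x₀ : Fin n → ℝ) (u : ℕ → Fin m → ℝ) : ℝ :=
  ∑ s ∈ Ico t N, (lqStage Q R S s (lqState A B x₀ u s) (u s) + ε * (u s ⬝ᵥ u s))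
    + lqState A B x₀ u N ⬝ᵥ H *ᵥ lqState A B x₀ u N

lemma lqCostPert_eq_lqCostToGo (x₀ : Fin n → ℝ) (u : ℕ → Fin m → ℝ) :
    lqCostPert N A B Q R S H ε x₀ u = lqCostToGo N A B Q R S H ε 0 x₀ u := by
  rw [lqCostToGo, ← range_eq_Ico, lqCostPert, lqCost_eq, sum_add_distrib, mul_sum]
  ring

lemma lqCostToGo_eq {t : ℕ} (ht : t ≤ N)
    (hwp : ∀ s, t ≤ s → s < N →
      (lqPe N A B Q R S H ε (s + 1)).IsSymm ∧ (lqMe N A B Q R S H ε s).PosDef)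
    (x₀ : Fin n → ℝ) (u : ℕ → Fin m → ℝ) :
    lqCostToGo N A B Q R S H ε t x₀ u =
      lqState A B x₀ u t ⬝ᵥ lqPe N A B Q R S H ε t *ᵥ lqState A B x₀ u t
        + ∑ s ∈ Ico t N, (u s - lqKe N A B Q R S H ε s *ᵥ lqState A B x₀ u s) ⬝ᵥ
          lqMe N A B Q R S H ε s *ᵥ (u s - lqKe N A B Q R S H ε s *ᵥ lqState A B x₀ u s) := by
  set x := lqState A B x₀ u
  set V := fun s => x s ⬝ᵥ lqPe N A B Q R S H ε s *ᵥ x s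
  have hstep : ∀ s ∈ Ico t N, lqStage Q R S s (x s) (u s) + ε * (u s ⬝ᵥ u s) =
      (u s - lqKe N A B Q R S H ε s *ᵥ x s) ⬝ᵥ
        lqMe N A B Q R S H ε s *ᵥ (u s - lqKe N A B Q R S H ε s *ᵥ x s) - (V (s + 1) - V s) := by
    intro s hs
    obtain ⟨hts, hsN⟩ := mem_Ico.mp hs
    obtain ⟨hP, hM⟩ := hwp s hts hsN
    have := lqStage_add_lqPe_succ N A B Q R S H ε hsN hP hM (x s) (u s)
    have hx : x (s + 1) = A s *ᵥ x s + B s *ᵥ u s := rfl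
    simp only [V, hx]
    linarith
  rw [lqCostToGo, sum_congr rfl hstep, sum_sub_distrib, sum_Ico_sub V ht]
  simp only [V, lqPe_self]
  ring

lemma mul_dotProduct_self_le_dotProduct_lqMe_mulVec {t : ℕ} (ht : t < N) (hε : 0 ≤ ε)
    (hpos : ∀ u : ℕ → Fin m → ℝ, 0 ≤ lqCost N A B Q R S H 0 u)
    (htail : ∀ s, t + 1 ≤ s → s < N →
      (lqPe N A B Q R S H ε (s + 1)).IsSymm ∧ (lqMe N A B Q R S H ε s).PosDef)
    (w : Fin m → ℝ) :
    ε * (w ⬝ᵥ w) ≤ w ⬝ᵥ lqMe N A B Q R S H ε t *ᵥ w := by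
  set K := lqKe N A B Q R S H ε
  -- the control that is zero before `t`, equal to `w` at `t`, and follows the feedback `K` after
  set u := clControl A B (fun s => if t < s then K s else 0) (Pi.single t w) 0
  have hx : lqState A B 0 u = clState A B (fun s => if t < s then K s else 0) (Pi.single t w) 0 :=
    lqState_clControl ..
  have hx_le : ∀ s ≤ t, lqState A B 0 u s = 0 := by
    rw [hx]
    exact clState_eq_zero_of_le A B _ fun s hs => by simp [hs.ne]
  have hu_le : ∀ s ≤ t, u s = (Pi.single t w : ℕ → Fin m → ℝ) s := by
    intro s hs
    simp only [u, clControl, ← hx, hx_le s hs, mulVec_zero, zero_add]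
  have hu_gt : ∀ s, t < s → u s = K s *ᵥ lqState A B 0 u s := by
    intro s hs
    simp only [u, clControl, ← hx, if_pos hs, Pi.single_eq_of_ne hs.ne', add_zero]
  have hx_succ : lqState A B 0 u (t + 1) = B t *ᵥ w := by
    rw [lqState, hx_le t le_rfl, hu_le t le_rfl, Pi.single_eq_same, mulVec_zero, zero_add]
  have hhead : ∑ s ∈ Ico 0 (t + 1), lqStage Q R S s (lqState A B 0 u s) (u s) = w ⬝ᵥ R t *ᵥ w := by
    rw [sum_eq_single_of_mem t (by simp) fun s hs hst => ?_]
    · simp [lqStage, hx_le t le_rfl, hu_le t le_rfl]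
    · have hs' : s ≤ t := Nat.lt_succ_iff.mp (mem_Ico.mp hs).2
      simp [lqStage, hx_le s hs', hu_le s hs', Pi.single_eq_of_ne hst]
  have htail_eq := lqCostToGo_eq N A B Q R S H ε (t := t + 1) ht htail 0 u
  rw [sum_eq_zero fun s hs => by rw [hu_gt s (mem_Ico.mp hs).1, sub_self, zero_dotProduct],
    add_zero, hx_succ, lqCostToGo, sum_add_distrib, ← mul_sum] at htail_eq
  have hcost := hpos u
  rw [lqCost_eq, range_eq_Ico, ← sum_Ico_consecutive _ (Nat.zero_le (t + 1)) ht, hhead] at hcost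
  have hnorm : 0 ≤ ε * ∑ s ∈ Ico (t + 1) N, u s ⬝ᵥ u s :=
    mul_nonneg hε (sum_nonneg fun s _ => dotProduct_self_star_nonneg (u s))
  simp only [lqMe, add_mulVec, smul_mulVec, one_mulVec, dotProduct_add, dotProduct_smul,
    smul_eq_mul, dotProduct_transpose_mul_mul_mulVec]
  linarith

lemma lqMe_isSymm {t : ℕ} (hR : (R t).IsSymm) (hP : (lqPe N A B Q R S H ε (t + 1)).IsSymm) :
    (lqMe N A B Q R S H ε t).IsSymm := by
  simp only [IsSymm, lqMe, transpose_add, transpose_mul, transpose_smul, transpose_one,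
    transpose_transpose, hR.eq, hP.eq, Matrix.mul_assoc]

lemma lqPe_isSymm_and_lqMe_posDef (hQ : ∀ t, (Q t).IsSymm) (hR : ∀ t, (R t).IsSymm) (hH : H.IsSymm)
    (hpos : ∀ u : ℕ → Fin m → ℝ, 0 ≤ lqCost N A B Q R S H 0 u) (hε : 0 < ε) :
    ∀ s < N, (lqPe N A B Q R S H ε (s + 1)).IsSymm ∧ (lqMe N A B Q R S H ε s).PosDef := by
  suffices h : ∀ t ≤ N, (lqPe N A B Q R S H ε t).IsSymm ∧ ∀ s, t ≤ s → s < N →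
      (lqPe N A B Q R S H ε (s + 1)).IsSymm ∧ (lqMe N A B Q R S H ε s).PosDef from
    fun s => (h 0 (Nat.zero_le N)).2 s (Nat.zero_le s)
  intro t ht
  induction ht using Nat.decreasingInduction with
  | self => exact ⟨(lqPe_self N A B Q R S H ε).symm ▸ hH, fun s hs hsN => absurd hs hsN.not_ge⟩
  | of_succ t ht ih =>
    obtain ⟨hP, htail⟩ := ih
    have hM := posDef_of_mul_dotProduct_self_le (lqMe_isSymm N A B Q R S H ε (hR t) hP) hε
      (mul_dotProduct_self_le_dotProduct_lqMe_mulVec N A B Q R S H ε ht hε.le hpos htail)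
    refine ⟨?_, fun s hs hsN => ?_⟩
    · simp only [IsSymm, lqPe_of_lt N A B Q R S H ε ht, transpose_sub, transpose_add,
        transpose_mul, transpose_transpose, transpose_nonsing_inv,
        (lqMe_isSymm N A B Q R S H ε (hR t) hP).eq, hP.eq, (hQ t).eq, Matrix.mul_assoc]
    · rcases hs.eq_or_lt with rfl | hlt
      · exact ⟨hP, hM⟩
      · exact htail s hlt hsN

lemma lqCostPert_lqUe_le (hQ : ∀ t, (Q t).IsSymm) (hR : ∀ t, (R t).IsSymm) (hH : H.IsSymm)
    (hpos : ∀ u : ℕ → Fin m → ℝ, 0 ≤ lqCost N A B Q R S H 0 u) (hε : 0 < ε)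
    (x₀ : Fin n → ℝ) (u : ℕ → Fin m → ℝ) :
    lqCostPert N A B Q R S H ε x₀ (lqUe N A B Q R S H ε x₀) ≤ lqCostPert N A B Q R S H ε x₀ u := by
  have hwp := lqPe_isSymm_and_lqMe_posDef N A B Q R S H ε hQ hR hH hpos hε
  have hfeedback : ∀ s, lqUe N A B Q R S H ε x₀ s =
      lqKe N A B Q R S H ε s *ᵥ lqState A B x₀ (lqUe N A B Q R S H ε x₀) s := by
    intro s
    rw [lqUe_eq_clControl, lqState_clControl, clControl, add_zero]
  have hwp₀ : ∀ s, 0 ≤ s → s < N → _ := fun s _ => hwp s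
  rw [lqCostPert_eq_lqCostToGo, lqCostPert_eq_lqCostToGo,
    lqCostToGo_eq N A B Q R S H ε (Nat.zero_le N) hwp₀,
    lqCostToGo_eq N A B Q R S H ε (Nat.zero_le N) hwp₀]
  simp only [← hfeedback, sub_self, zero_dotProduct, sum_const_zero, add_zero, lqState]
  exact le_add_of_nonneg_right (sum_nonneg fun s hs =>
    (hwp s (mem_Ico.mp hs).2).2.posSemidef.dotProduct_mulVec_nonneg _)

lemma lqCost_lqUe_le_lqCostPert (hQ : ∀ t, (Q t).IsSymm) (hR : ∀ t, (R t).IsSymm)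
    (hH : H.IsSymm) (hpos : ∀ u : ℕ → Fin m → ℝ, 0 ≤ lqCost N A B Q R S H 0 u) (hε : 0 < ε)
    (x₀ : Fin n → ℝ) (u : ℕ → Fin m → ℝ) :
    lqCost N A B Q R S H x₀ (lqUe N A B Q R S H ε x₀) ≤ lqCostPert N A B Q R S H ε x₀ u :=
  (le_add_of_nonneg_right (mul_nonneg hε.le (sum_nonneg fun _ _ =>
    dotProduct_self_star_nonneg _))).trans
      (lqCostPert_lqUe_le N A B Q R S H ε hQ hR hH hpos hε x₀ u)

lemma tendsto_lqCostPert {ι : Type*} {l : Filter ι} {εs : ι → ℝ} (hεs : Tendsto εs l (𝓝 0))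
    (x₀ : Fin n → ℝ) (u : ℕ → Fin m → ℝ) :
    Tendsto (fun i => lqCostPert N A B Q R S H (εs i) x₀ u) l (𝓝 (lqCost N A B Q R S H x₀ u)) := by
  simpa [lqCostPert] using
    (hεs.mul_const (∑ t ∈ range N, u t ⬝ᵥ u t)).const_add (lqCost N A B Q R S H x₀ u)

end Riccati

lemma exists_subseq_tendsto_of_dotProduct_self_le {ι κ : Type*} [Countable ι] [Fintype κ]
    {C : ℝ} (v : ℕ → ι → κ → ℝ) (hv : ∀ k i, v k i ⬝ᵥ v k i ≤ C) :
    ∃ v₀ : ι → κ → ℝ, ∃ φ : ℕ → ℕ, StrictMono φ ∧ Tendsto (v ∘ φ) atTop (𝓝 v₀) := by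
  have hK : IsCompact (Set.univ.pi fun _ : ι => Set.univ.pi fun _ : κ => Set.Icc (-√C) √C) :=
    isCompact_univ_pi fun _ => isCompact_univ_pi fun _ => isCompact_Icc
  obtain ⟨v₀, -, φ, hφ, hlim⟩ := hK.tendsto_subseq (x := v) fun k => by
    simp only [Set.mem_pi, Set.mem_univ, true_implies]
    intro i j
    have hsq : v k i j ^ 2 ≤ C :=
      (sq (v k i j)).trans_le <| (single_le_sum (fun j _ => mul_self_nonneg (v k i j))
        (mem_univ j)).trans (hv k i)
    exact abs_le.mp (Real.abs_le_sqrt hsq)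
  exact ⟨v₀, φ, hφ, hlim⟩

lemma ite_dotProduct_self_le_sum_range {κ : Type*} [Fintype κ] (f : ℕ → κ → ℝ) (N t : ℕ) :
    (if t < N then f t else 0) ⬝ᵥ (if t < N then f t else 0) ≤ ∑ s ∈ range N, f s ⬝ᵥ f s := by
  split_ifs with ht
  · exact single_le_sum (fun s _ => dotProduct_self_star_nonneg (f s)) (mem_range.mpr ht)
  · simpa using sum_nonneg fun s _ => dotProduct_self_star_nonneg (f s)

theorem stmt_11_general {n m : ℕ} (N : ℕ)
    (A : ℕ → Matrix (Fin n) (Fin n) ℝ) (B : ℕ → Matrix (Fin n) (Fin m) ℝ)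
    (Q : ℕ → Matrix (Fin n) (Fin n) ℝ) (R : ℕ → Matrix (Fin m) (Fin m) ℝ)
    (S : ℕ → Matrix (Fin m) (Fin n) ℝ) (H : Matrix (Fin n) (Fin n) ℝ)
    (hQ : ∀ t, (Q t).IsSymm) (hR : ∀ t, (R t).IsSymm) (hH : H.IsSymm)
    (hpos : ∀ u : ℕ → Fin m → ℝ, 0 ≤ lqCost N A B Q R S H 0 u)
    (x₀ : Fin n → ℝ)
    (hbdd : ∃ C : ℝ, ∀ ε : ℝ, 0 < ε → ε ≤ 1 →
      ∑ t ∈ range N, lqUe N A B Q R S H ε x₀ t ⬝ᵥ lqUe N A B Q R S H ε x₀ t ≤ C) :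
    ∃ ubar : ℕ → Fin m → ℝ, ∀ u : ℕ → Fin m → ℝ,
      lqCost N A B Q R S H x₀ ubar ≤ lqCost N A B Q R S H x₀ u := by
  obtain ⟨C, hC⟩ := hbdd
  set ε : ℕ → ℝ := fun k => 1 / ((k : ℝ) + 1)
  have hε : ∀ k, 0 < ε k := fun k => Nat.one_div_pos_of_nat
  have hε1 : ∀ k, ε k ≤ 1 := fun k => div_le_one_of_le₀ (by simp) (by positivity)
  -- truncation after the horizon makes the family bounded in every coordinate
  set v : ℕ → ℕ → Fin m → ℝ := fun k t => if t < N then lqUe N A B Q R S H (ε k) x₀ t else 0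
  obtain ⟨ubar, φ, hφ, hlim⟩ := exists_subseq_tendsto_of_dotProduct_self_le v fun k t =>
    (ite_dotProduct_self_le_sum_range _ N t).trans (hC (ε k) (hε k) (hε1 k))
  refine ⟨ubar, fun u => le_of_tendsto_of_tendsto'
    (((continuous_lqCost N A B Q R S H x₀).tendsto ubar).comp hlim)
    (tendsto_lqCostPert N A B Q R S H
      (tendsto_one_div_add_atTop_nhds_zero_nat.comp hφ.tendsto_atTop) x₀ u) fun k => ?_⟩
  exact (lqCost_congr N A B Q R S H x₀ fun s hs => if_pos hs).trans_le
    (lqCost_lqUe_le_lqCostPert N A B Q R S H (ε (φ k)) hQ hR hH hpos (hε _) x₀ u)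

/-- Theorem 4 (2) ⇒ (1): boundedness of the family `{u^ε : 0 < ε ≤ 1}` in
`L²` implies open-loop solvability of Problem (LQ) at `x₀`. -/
theorem stmt_11 {n m : ℕ} (hn : 0 < n) (hm : 0 < m) (N : ℕ) (hN : 0 < N)
    (A : ℕ → Matrix (Fin n) (Fin n) ℝ) (B : ℕ → Matrix (Fin n) (Fin m) ℝ)
    (Q : ℕ → Matrix (Fin n) (Fin n) ℝ) (R : ℕ → Matrix (Fin m) (Fin m) ℝ)
    (S : ℕ → Matrix (Fin m) (Fin n) ℝ) (H : Matrix (Fin n) (Fin n) ℝ)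
    (hQ : ∀ t, (Q t).IsSymm) (hR : ∀ t, (R t).IsSymm) (hH : H.IsSymm)
    (hpos : ∀ u : ℕ → Fin m → ℝ, 0 ≤ lqCost N A B Q R S H 0 u)
    (x₀ : Fin n → ℝ)
    (hbdd : ∃ C : ℝ, ∀ ε : ℝ, 0 < ε → ε ≤ 1 →
      ∑ t ∈ range N, lqUe N A B Q R S H ε x₀ t ⬝ᵥ lqUe N A B Q R S H ε x₀ t ≤ C) :
    ∃ ubar : ℕ → Fin m → ℝ, ∀ u : ℕ → Fin m → ℝ,
      lqCost N A B Q R S H x₀ ubar ≤ lqCost N A B Q R S H x₀ u :=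
  stmt_11_general N A B Q R S H hQ hR hH hpos x₀ hbdd
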